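/- For every τ in the upper half plane, all integers m, n, and all x, z ∈ ℂ with θ(x|τ) ≠ 0 and θ(2πiz|τ) ≠ 0, the Jacobi form F satisfies the elliptic property F(x, z + mτ + n, τ) = e^{−mx} · F(x, z, τ). -/

import Mathlib

open Complex Filter

/-- The Jacobi theta function `θ(z|τ) = ∑_{n∈ℤ} (−1)^n e^{iπτ(n+1/2)²} e^{z(n+1/2)}`. -/
noncomputable def jTheta (z : ℂ) (τ : UpperHalfPlane) : ℂ :=
  ∑' n : ℤ, (-1 : ℂ) ^ n * Complex.exp (Real.pi * I * (τ : ℂ) * ((n : ℂ) + 1/2) ^ 2)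
    * Complex.exp (z * ((n : ℂ) + 1/2))

/-- The Jacobi form `F(x,z,τ) = 2πi θ'(0|τ) θ(x+2πiz|τ)/(θ(x|τ) θ(2πiz|τ))`. -/
noncomputable def jacobiF (x z : ℂ) (τ : UpperHalfPlane) : ℂ :=
  2 * Real.pi * I * deriv (fun w => jTheta w τ) 0 * jTheta (x + 2 * Real.pi * I * z) τ /
    (jTheta x τ * jTheta (2 * Real.pi * I * z) τ)

/-!
Shifting the argument of `θ` by `2πi(mτ + n)` multiplies it by the automorphy factor
`(-1)^(m+n) e^{-πim²τ - mw}`: after completing the square, the shifted series is the original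
one reindexed by `k ↦ k - m`, and reindexing a `tsum` along a bijection needs no convergence.
In `F` the numerator and the denominator pick up such factors at `x + 2πiz` and at `2πiz`,
whose ratio is `e^{-mx}`.
-/

open scoped Real

theorem neg_one_zpow_eq_exp (k : ℤ) : (-1 : ℂ) ^ k = exp (k * (π * I)) := by
  rw [exp_int_mul, exp_pi_mul_I]

noncomputable def jThetaAutomorphyFactor (τ : UpperHalfPlane) (m n : ℤ) (w : ℂ) : ℂ :=
  (-1 : ℂ) ^ (m + n) * exp (-(π * I * m ^ 2 * τ) - m * w)

theorem jThetaAutomorphyFactor_ne_zero (τ : UpperHalfPlane) (m n : ℤ) (w : ℂ) :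
    jThetaAutomorphyFactor τ m n w ≠ 0 :=
  mul_ne_zero (zpow_ne_zero _ (by norm_num)) (exp_ne_zero _)

theorem jThetaAutomorphyFactor_add (τ : UpperHalfPlane) (m n : ℤ) (x w : ℂ) :
    jThetaAutomorphyFactor τ m n (x + w) = exp (-m * x) * jThetaAutomorphyFactor τ m n w := by
  rw [jThetaAutomorphyFactor, jThetaAutomorphyFactor, mul_left_comm, ← exp_add]
  ring_nf

theorem jTheta_add_two_pi_I_mul (τ : UpperHalfPlane) (m n : ℤ) (w : ℂ) :
    jTheta (w + 2 * π * I * (m * τ + n)) τ = jThetaAutomorphyFactor τ m n w * jTheta w τ := by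
  rw [jTheta, jTheta, ← tsum_mul_left, ← (Equiv.subRight m).tsum_eq]
  congr 1 with k
  simp only [Equiv.subRight_apply, jThetaAutomorphyFactor, neg_one_zpow_eq_exp, ← exp_add]
  rw [exp_eq_exp_iff_exists_int]
  exact ⟨n * (k - m) - m, by push_cast; ring⟩

theorem jacobiF_elliptic_general (τ : UpperHalfPlane) (m n : ℤ) (x z : ℂ) :
    jacobiF x (z + (m : ℂ) * (τ : ℂ) + (n : ℂ)) τ
      = Complex.exp (-(m : ℂ) * x) * jacobiF x z τ := by
  have shift : 2 * π * I * (z + m * τ + n) = 2 * π * I * z + 2 * π * I * (m * τ + n) := by ring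
  rw [jacobiF, jacobiF, shift, ← add_assoc, jTheta_add_two_pi_I_mul, jTheta_add_two_pi_I_mul,
    jThetaAutomorphyFactor_add]
  have hfactor := jThetaAutomorphyFactor_ne_zero τ m n (2 * π * I * z)
  field_simp

/-- Elliptic property of the Jacobi form: `F(x, z + mτ + n, τ) = e^{−mx} F(x,z,τ)`. -/
theorem jacobiF_elliptic (τ : UpperHalfPlane) (m n : ℤ) (x z : ℂ)
    (hx : jTheta x τ ≠ 0) (hz : jTheta (2 * Real.pi * I * z) τ ≠ 0) :
    jacobiF x (z + (m : ℂ) * (τ : ℂ) + (n : ℂ)) τ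
      = Complex.exp (-(m : ℂ) * x) * jacobiF x z τ :=
  jacobiF_elliptic_general τ m n x z
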